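/- arXiv:1010.4968 — 5 statements merged into one kernel-verified Lean document; each statement's English description precedes it below -/
import Mathlib

section
/- For a finite connected graph G = (V,E) with disjoint nonempty vertex subsets A₁, A₂ joined by at least one path, the supremum of the normalized length l̂_m = l_m(A₁,A₂)³ / vol(m) over all metrics m with positive volume is attained by some metric m₀, and this supremum is positive and finite. -/
noncomputable def gdist {V : Type*} (G : SimpleGraph V) (m : V → ℝ) (A B : Set V) : ℝ :=
  sInf {x : ℝ | ∃ u ∈ A, ∃ v ∈ B, ∃ w : G.Walk u v, x = (w.support.map m).sum}

noncomputable def gvol {V : Type*} [Fintype V] (m : V → ℝ) : ℝ := ∑ v, m v ^ 3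

/-- `l.toFinset` with a canonical classical `DecidableEq` instance. -/
noncomputable def lsetOf {V : Type*} (l : List V) : Finset V :=
  @List.toFinset V (Classical.decEq V) l

lemma mem_lsetOf {V : Type*} {l : List V} {x : V} : x ∈ lsetOf l ↔ x ∈ l := by
  classical
  unfold lsetOf
  rw [Subsingleton.elim (Classical.decEq V) (by infer_instance)]
  exact List.mem_toFinset

lemma sum_lsetOf {V : Type*} {l : List V} (m : V → ℝ) (hl : l.Nodup) :
    (lsetOf l).sum m = (l.map m).sum := by
  classical
  unfold lsetOf
  rw [Subsingleton.elim (Classical.decEq V) (by infer_instance)]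
  exact List.sum_toFinset m hl

noncomputable def pathSets {V : Type*} [Fintype V] (G : SimpleGraph V) (A B : Set V) :
    Finset (Finset V) :=
  (Set.toFinite {S : Finset V | ∃ u ∈ A, ∃ v ∈ B, ∃ p : G.Path u v,
    S = lsetOf p.1.support}).toFinset

lemma mem_pathSets {V : Type*} [Fintype V] {G : SimpleGraph V} {A B : Set V} {S : Finset V} :
    S ∈ pathSets G A B ↔ ∃ u ∈ A, ∃ v ∈ B, ∃ p : G.Path u v, S = lsetOf p.1.support := by
  simp [pathSets]

lemma list_sum_le {V : Type*} (m : V → ℝ) (hm : ∀ v, 0 ≤ m v)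
    {l₁ l₂ : List V} (h₁ : l₁.Nodup) (hsub : l₁ ⊆ l₂) :
    (l₁.map m).sum ≤ (l₂.map m).sum := by
  classical
  rw [← List.sum_toFinset m h₁]
  calc l₁.toFinset.sum m ≤ l₂.toFinset.sum m := by
        apply Finset.sum_le_sum_of_subset_of_nonneg
        · intro x hx
          simp only [List.mem_toFinset] at *
          exact hsub hx
        · intro x _ _; exact hm x
    _ = (l₂.dedup.map m).sum := by
        rw [← List.sum_toFinset m l₂.nodup_dedup]
        congr 1
        ext x
        simp
    _ ≤ (l₂.map m).sum := by
        have hle : (l₂.dedup : Multiset V) ≤ (l₂ : Multiset V) := Multiset.dedup_le _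
        obtain ⟨u, hu⟩ := Multiset.le_iff_exists_add.mp hle
        have key : ((l₂ : Multiset V).map m).sum
            = ((l₂.dedup : Multiset V).map m).sum + (u.map m).sum := by
          rw [hu, Multiset.map_add, Multiset.sum_add]
        have h0 : 0 ≤ (u.map m).sum := Multiset.sum_nonneg (by
          intro x hx
          obtain ⟨y, _, rfl⟩ := Multiset.mem_map.mp hx
          exact hm y)
        have e1 : (l₂.map m).sum = ((l₂ : Multiset V).map m).sum := by simp
        have e2 : (l₂.dedup.map m).sum = ((l₂.dedup : Multiset V).map m).sum := by simp
        rw [e1, e2, key]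
        linarith

/-- Existence of an extremal metric: the supremum of the normalized length
over metrics of positive volume is attained, and is positive (and finite, being a real). -/
theorem stmt1 {V : Type*} [Fintype V] (G : SimpleGraph V) (hG : G.Connected)
    (A₁ A₂ : Set V) (h₁ : A₁.Nonempty) (h₂ : A₂.Nonempty) (hdisj : Disjoint A₁ A₂)
    (hjoin : ∃ u ∈ A₁, ∃ v ∈ A₂, Nonempty (G.Walk u v)) :
    ∃ m₀ : V → ℝ, (∀ v, 0 ≤ m₀ v) ∧ 0 < gvol m₀ ∧
      0 < (gdist G m₀ A₁ A₂) ^ 3 / gvol m₀ ∧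
      ∀ m : V → ℝ, (∀ v, 0 ≤ m v) → 0 < gvol m →
        (gdist G m A₁ A₂) ^ 3 / gvol m ≤ (gdist G m₀ A₁ A₂) ^ 3 / gvol m₀ := by
  classical
  obtain ⟨u₀, hu₀, v₀, hv₀, -⟩ := hjoin
  have hne : (pathSets G A₁ A₂).Nonempty := by
    obtain ⟨w⟩ := hG u₀ v₀
    exact ⟨_, mem_pathSets.mpr ⟨u₀, hu₀, v₀, hv₀, w.toPath, rfl⟩⟩
  set D : (V → ℝ) → ℝ := fun m => (pathSets G A₁ A₂).inf' hne (fun S => ∑ v ∈ S, m v) with hD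
  -- gdist = D for nonneg m
  have hgd : ∀ m : V → ℝ, (∀ v, 0 ≤ m v) → gdist G m A₁ A₂ = D m := by
    intro m hm
    have hlb : ∀ x ∈ {x : ℝ | ∃ u ∈ A₁, ∃ v ∈ A₂, ∃ w : G.Walk u v,
        x = (w.support.map m).sum}, D m ≤ x := by
      rintro x ⟨u, hu, v, hv, w, rfl⟩
      have hmem : lsetOf w.toPath.1.support ∈ pathSets G A₁ A₂ :=
        mem_pathSets.mpr ⟨u, hu, v, hv, w.toPath, rfl⟩
      have hle1 : D m ≤ ∑ z ∈ lsetOf w.toPath.1.support, m z :=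
        Finset.inf'_le _ hmem
      have heq1 : ∑ z ∈ lsetOf w.toPath.1.support, m z
          = (w.toPath.1.support.map m).sum :=
        sum_lsetOf m w.toPath.2.support_nodup
      have hle2 : (w.toPath.1.support.map m).sum ≤ (w.support.map m).sum :=
        list_sum_le m hm w.toPath.2.support_nodup (SimpleGraph.Walk.support_toPath_subset w)
      linarith
    have hmem : D m ∈ {x : ℝ | ∃ u ∈ A₁, ∃ v ∈ A₂, ∃ w : G.Walk u v,
        x = (w.support.map m).sum} := by
      obtain ⟨S, hS, hSval⟩ := Finset.exists_mem_eq_inf' hne (fun S => ∑ v ∈ S, m v)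
      obtain ⟨u, hu, v, hv, p, rfl⟩ := mem_pathSets.mp hS
      refine ⟨u, hu, v, hv, p.1, ?_⟩
      have h1 : D m = ∑ v ∈ lsetOf p.1.support, m v := hSval
      rw [h1]
      exact (sum_lsetOf m p.2.support_nodup)
    exact le_antisymm (csInf_le ⟨D m, hlb⟩ hmem) (le_csInf ⟨D m, hmem⟩ hlb)
  -- scaling
  have hscale : ∀ (c : ℝ), 0 ≤ c → ∀ m : V → ℝ, D (fun v => c * m v) = c * D m := by
    intro c hc m
    apply le_antisymm
    · obtain ⟨S, hS, hSval⟩ := Finset.exists_mem_eq_inf' hne (fun S => ∑ v ∈ S, m v)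
      have h1 : D (fun v => c * m v) ≤ ∑ v ∈ S, c * m v := Finset.inf'_le _ hS
      have h2 : (∑ v ∈ S, m v) = D m := hSval.symm
      have h3 : (∑ v ∈ S, c * m v) = c * ∑ v ∈ S, m v := by rw [Finset.mul_sum]
      rw [h3, h2] at h1
      exact h1
    · apply Finset.le_inf'
      intro S hS
      have hle : D m ≤ ∑ v ∈ S, m v := Finset.inf'_le _ hS
      calc c * D m ≤ c * ∑ v ∈ S, m v := mul_le_mul_of_nonneg_left hle hc
        _ = ∑ v ∈ S, c * m v := by rw [Finset.mul_sum]
  have hDnonneg : ∀ m : V → ℝ, (∀ v, 0 ≤ m v) → 0 ≤ D m := by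
    intro m hm
    apply Finset.le_inf'
    intro S _
    exact Finset.sum_nonneg fun v _ => hm v
  -- D bounded below by c on metrics ≥ c
  have hDlow : ∀ (c : ℝ) (m : V → ℝ), 0 < c → (∀ v, c ≤ m v) → c ≤ D m := by
    intro c m hc hcm
    apply Finset.le_inf'
    intro S hS
    obtain ⟨u, hu, v, hv, p, rfl⟩ := mem_pathSets.mp hS
    have hvmem : v ∈ lsetOf p.1.support := by
      rw [mem_lsetOf]
      exact SimpleGraph.Walk.end_mem_support _
    calc c ≤ m v := hcm v
      _ ≤ ∑ x ∈ lsetOf p.1.support, m x :=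
          Finset.single_le_sum (fun x _ => le_trans hc.le (hcm x)) hvmem
  -- constant metric
  have hn : (0:ℝ) < (Fintype.card V : ℝ) := by
    have : Nonempty V := ⟨u₀⟩
    exact_mod_cast Fintype.card_pos
  set c : ℝ := (Fintype.card V : ℝ) ^ (-(1/3) : ℝ) with hc
  have hcpos : 0 < c := Real.rpow_pos_of_pos hn _
  have hc3 : c ^ 3 = ((Fintype.card V : ℝ))⁻¹ := by
    rw [hc, ← Real.rpow_natCast ((Fintype.card V : ℝ) ^ (-(1/3) : ℝ)) 3,
      ← Real.rpow_mul hn.le]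
    rw [show (-(1/3) : ℝ) * (3:ℕ) = -1 by push_cast; ring, Real.rpow_neg_one]
  have hgvolc : gvol (fun _ : V => c) = 1 := by
    simp only [gvol, Finset.sum_const, Finset.card_univ, nsmul_eq_mul, hc3]
    field_simp
  -- compact set
  set K : Set (V → ℝ) := {m | (∀ v, 0 ≤ m v) ∧ gvol m = 1} with hK
  have hgvolcont : Continuous (gvol : (V → ℝ) → ℝ) :=
    continuous_finset_sum _ fun v _ => (continuous_apply v).pow 3
  have hKclosed : IsClosed K := by
    have h1 : K = (⋂ v, {m : V → ℝ | 0 ≤ m v}) ∩ (gvol ⁻¹' {1}) := by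
      ext m; simp [hK, Set.mem_iInter]
    rw [h1]
    exact IsClosed.inter
      (isClosed_iInter fun v => isClosed_le continuous_const (continuous_apply v))
      (isClosed_singleton.preimage hgvolcont)
  have hKsub : K ⊆ Set.Icc (0 : V → ℝ) 1 := by
    rintro m ⟨hm, hv⟩
    constructor
    · intro v; exact hm v
    · intro v
      have h1 : m v ^ 3 ≤ gvol m :=
        Finset.single_le_sum (f := fun v => m v ^ 3)
          (fun x _ => pow_nonneg (hm x) 3) (Finset.mem_univ v)
      rw [hv] at h1
      exact (pow_le_one_iff_of_nonneg (hm v) (by norm_num)).mp h1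
  have hKcompact : IsCompact K :=
    IsCompact.of_isClosed_subset isCompact_Icc hKclosed hKsub
  have hKne : ((fun _ : V => c)) ∈ K := ⟨fun _ => hcpos.le, hgvolc⟩
  have hDcont : Continuous D := by
    rw [hD]
    exact Continuous.finset_inf'_apply hne
      (fun S _ => continuous_finset_sum _ fun v _ => continuous_apply v)
  obtain ⟨m₀, hm₀K, hmax⟩ := hKcompact.exists_isMaxOn ⟨_, hKne⟩ hDcont.continuousOn
  obtain ⟨hm₀nn, hm₀vol⟩ := hm₀K
  have hcD : c ≤ D m₀ := le_trans (hDlow c _ hcpos fun _ => le_rfl) (hmax hKne)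
  have hDm₀pos : 0 < D m₀ := lt_of_lt_of_le hcpos hcD
  refine ⟨m₀, hm₀nn, by rw [hm₀vol]; norm_num, ?_, ?_⟩
  · rw [hgd m₀ hm₀nn, hm₀vol]
    positivity
  · intro m hm hvol
    set t : ℝ := gvol m ^ ((1:ℝ)/3) with ht
    have htpos : 0 < t := Real.rpow_pos_of_pos hvol _
    have ht3 : t ^ 3 = gvol m := by
      rw [ht, ← Real.rpow_natCast (gvol m ^ ((1:ℝ)/3)) 3, ← Real.rpow_mul hvol.le]
      rw [show ((1:ℝ)/3) * (3:ℕ) = 1 by push_cast; ring, Real.rpow_one]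
    set m' : V → ℝ := fun v => t⁻¹ * m v with hm'
    have hm'nn : ∀ v, 0 ≤ m' v := fun v => mul_nonneg (inv_nonneg.mpr htpos.le) (hm v)
    have hm'vol : gvol m' = 1 := by
      have h1 : gvol m' = t⁻¹ ^ 3 * gvol m := by
        simp only [gvol, hm', mul_pow, ← Finset.mul_sum]
      rw [h1, inv_pow, ht3, inv_mul_cancel₀ hvol.ne']
    have hm'K : m' ∈ K := ⟨hm'nn, hm'vol⟩
    have hDm' : D m' = t⁻¹ * D m := hscale t⁻¹ (inv_nonneg.mpr htpos.le) m
    have hle : D m' ≤ D m₀ := hmax hm'K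
    have hcube : D m' ^ 3 ≤ D m₀ ^ 3 :=
      pow_le_pow_left₀ (hDnonneg m' hm'nn) hle 3
    rw [hgd m hm, hgd m₀ hm₀nn, hm₀vol]
    have hcomp : D m ^ 3 / gvol m = D m' ^ 3 := by
      rw [hDm', mul_pow, inv_pow, ht3, div_eq_inv_mul]
    rw [hcomp]
    simpa using hcube
end

section
/- There is a unique extremal metric m₀ for (G, A₁, A₂) with vol(m₀) = 1: if m₁ and m₂ are metrics with vol(m₁) = vol(m₂) = 1 that both realize the extremal length λ(G;A₁,A₂) = sup_m l_m(A₁,A₂)³/vol(m), then m₁ = m₂. -/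
lemma walk_sum_nonneg {V : Type*} {G : SimpleGraph V} (m : V → ℝ) (hm : ∀ v, 0 ≤ m v)
    {u v : V} (w : G.Walk u v) : 0 ≤ (w.support.map m).sum :=
  List.sum_nonneg (fun x hx => by
    obtain ⟨y, -, rfl⟩ := List.mem_map.1 hx
    exact hm y)

lemma list_sum_avg {V : Type*} (m₁ m₂ : V → ℝ) (l : List V) :
    (l.map (fun v => (m₁ v + m₂ v) / 2)).sum = ((l.map m₁).sum + (l.map m₂).sum) / 2 := by
  induction l with
  | nil => simp
  | cons a t ih => simp [ih]; ring

lemma cube_avg_le {a b : ℝ} (ha : 0 ≤ a) (hb : 0 ≤ b) :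
    ((a + b) / 2) ^ 3 ≤ (a ^ 3 + b ^ 3) / 2 := by
  nlinarith [sq_nonneg (a - b), sq_nonneg (a + b)]

lemma cube_avg_lt {a b : ℝ} (ha : 0 ≤ a) (hb : 0 ≤ b) (hab : a ≠ b) :
    ((a + b) / 2) ^ 3 < (a ^ 3 + b ^ 3) / 2 := by
  have hne : a - b ≠ 0 := sub_ne_zero.2 hab
  have h1 : 0 < (a - b) ^ 2 := by positivity
  have h2 : 0 < a + b := by
    rcases lt_or_gt_of_ne hab with h | h <;> linarith
  nlinarith [mul_pos h1 h2]

/-- Uniqueness of the extremal metric of unit volume. -/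
theorem stmt2 {V : Type*} [Fintype V] (G : SimpleGraph V) (hG : G.Connected)
    (A₁ A₂ : Set V) (h₁ : A₁.Nonempty) (h₂ : A₂.Nonempty)
    (hjoin : ∃ u ∈ A₁, ∃ v ∈ A₂, Nonempty (G.Walk u v))
    (m₁ m₂ : V → ℝ) (hm₁ : ∀ v, 0 ≤ m₁ v) (hm₂ : ∀ v, 0 ≤ m₂ v)
    (hv₁ : gvol m₁ = 1) (hv₂ : gvol m₂ = 1)
    (hext₁ : ∀ m : V → ℝ, (∀ v, 0 ≤ m v) → 0 < gvol m →
      (gdist G m A₁ A₂) ^ 3 / gvol m ≤ (gdist G m₁ A₁ A₂) ^ 3 / gvol m₁)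
    (hext₂ : ∀ m : V → ℝ, (∀ v, 0 ≤ m v) → 0 < gvol m →
      (gdist G m A₁ A₂) ^ 3 / gvol m ≤ (gdist G m₂ A₁ A₂) ^ 3 / gvol m₂) :
    m₁ = m₂ := by
  by_contra hne
  obtain ⟨u₀, hu₀, v₀, hv₀, ⟨w₀⟩⟩ := hjoin
  -- basic facts about the distance sets
  have hSne : ∀ m : V → ℝ,
      {x : ℝ | ∃ u ∈ A₁, ∃ v ∈ A₂, ∃ w : G.Walk u v, x = (w.support.map m).sum}.Nonempty :=
    fun m => ⟨_, u₀, hu₀, v₀, hv₀, w₀, rfl⟩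
  have hbdd : ∀ m : V → ℝ, (∀ v, 0 ≤ m v) →
      BddBelow {x : ℝ | ∃ u ∈ A₁, ∃ v ∈ A₂, ∃ w : G.Walk u v, x = (w.support.map m).sum} := by
    intro m hm
    refine ⟨0, fun x hx => ?_⟩
    obtain ⟨u, -, v, -, w, rfl⟩ := hx
    exact walk_sum_nonneg m hm w
  have hdist_nonneg : ∀ m : V → ℝ, (∀ v, 0 ≤ m v) → 0 ≤ gdist G m A₁ A₂ := by
    intro m hm
    refine le_csInf (hSne m) (fun x hx => ?_)
    obtain ⟨u, -, v, -, w, rfl⟩ := hx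
    exact walk_sum_nonneg m hm w
  set l₁ := gdist G m₁ A₁ A₂ with hl₁
  set l₂ := gdist G m₂ A₁ A₂ with hl₂
  have hl₁0 : 0 ≤ l₁ := hdist_nonneg m₁ hm₁
  have hl₂0 : 0 ≤ l₂ := hdist_nonneg m₂ hm₂
  -- V is nonempty
  obtain ⟨a₀, -⟩ := h₁
  haveI : Nonempty V := ⟨a₀⟩
  -- l₁ is positive: test against the constant metric 1
  have hl₁pos : 0 < l₁ := by
    set o : V → ℝ := fun _ => 1 with ho
    have hvo : gvol o = (Fintype.card V : ℝ) := by simp [gvol, o]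
    have hvopos : 0 < gvol o := by
      rw [hvo]; exact_mod_cast Fintype.card_pos
    have hdo : (1 : ℝ) ≤ gdist G o A₁ A₂ := by
      refine le_csInf (hSne o) (fun x hx => ?_)
      obtain ⟨u, -, v, -, w, rfl⟩ := hx
      have hsum : (w.support.map o).sum = (w.support.length : ℝ) := by
        have : w.support.map o = List.replicate w.support.length (1:ℝ) := by
          simp [o, List.map_const']
        rw [this, List.sum_replicate]
        simp
      rw [hsum]
      have : 1 ≤ w.support.length := by
        rw [SimpleGraph.Walk.length_support]; omega
      exact_mod_cast this
    have := hext₁ o (fun _ => zero_le_one) hvopos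
    rw [hv₁] at this
    have h13 : (1:ℝ) ≤ (gdist G o A₁ A₂) ^ 3 := one_le_pow₀ hdo
    have hpos : 0 < (gdist G o A₁ A₂) ^ 3 / gvol o := by positivity
    have hcube : 0 < l₁ ^ 3 / 1 := lt_of_lt_of_le hpos this
    by_contra hc
    push_neg at hc
    have h0 : l₁ = 0 := le_antisymm hc hl₁0
    rw [h0] at hcube
    norm_num at hcube
  -- l₁ ≤ l₂ and l₂ ≤ l₁ via extremality
  have h12 : l₁ ≤ l₂ := by
    have := hext₂ m₁ hm₁ (by rw [hv₁]; norm_num)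
    rw [hv₁, hv₂] at this
    simp only [div_one] at this
    exact le_of_pow_le_pow_left₀ (by norm_num) hl₂0 this
  have h21 : l₂ ≤ l₁ := by
    have := hext₁ m₂ hm₂ (by rw [hv₂]; norm_num)
    rw [hv₁, hv₂] at this
    simp only [div_one] at this
    exact le_of_pow_le_pow_left₀ (by norm_num) hl₁0 this
  have hleq : l₁ = l₂ := le_antisymm h12 h21
  -- the averaged metric
  set m : V → ℝ := fun v => (m₁ v + m₂ v) / 2 with hm
  have hmnn : ∀ v, 0 ≤ m v := fun v => by
    have := hm₁ v; have := hm₂ v; simp only [m]; linarith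
  -- its distance is at least l₁
  have hdm : l₁ ≤ gdist G m A₁ A₂ := by
    refine le_csInf (hSne m) (fun x hx => ?_)
    obtain ⟨u, hu, v, hv, w, rfl⟩ := hx
    have h1 : l₁ ≤ (w.support.map m₁).sum :=
      csInf_le (hbdd m₁ hm₁) ⟨u, hu, v, hv, w, rfl⟩
    have h2 : l₂ ≤ (w.support.map m₂).sum :=
      csInf_le (hbdd m₂ hm₂) ⟨u, hu, v, hv, w, rfl⟩
    rw [hm, list_sum_avg]
    linarith
  -- its volume is positive and strictly less than 1
  have hex : ∃ v, m₁ v ≠ m₂ v := by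
    by_contra hc
    push_neg at hc
    exact hne (funext hc)
  obtain ⟨vd, hvd⟩ := hex
  have hvm_lt : gvol m < 1 := by
    have : gvol m < ∑ v, (m₁ v ^ 3 + m₂ v ^ 3) / 2 := by
      refine Finset.sum_lt_sum (fun i _ => cube_avg_le (hm₁ i) (hm₂ i))
        ⟨vd, Finset.mem_univ vd, cube_avg_lt (hm₁ vd) (hm₂ vd) hvd⟩
    have heq : ∑ v, (m₁ v ^ 3 + m₂ v ^ 3) / 2 = 1 := by
      have : ∑ v, (m₁ v ^ 3 + m₂ v ^ 3) / 2 = (gvol m₁ + gvol m₂) / 2 := by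
        unfold gvol
        rw [← Finset.sum_add_distrib, ← Finset.sum_div]
      rw [this, hv₁, hv₂]; norm_num
    linarith
  have hvm_pos : 0 < gvol m := by
    have hex1 : ∃ v, 0 < m₁ v := by
      by_contra hc
      push_neg at hc
      have : ∀ v, m₁ v = 0 := fun v => le_antisymm (hc v) (hm₁ v)
      have : gvol m₁ = 0 := by simp [gvol, this]
      rw [hv₁] at this; norm_num at this
    obtain ⟨vp, hvp⟩ := hex1
    have hterm : 0 < m vp ^ 3 := by
      have hpv : 0 < m vp := by
        have := hm₂ vp; simp only [m]; linarith
      exact pow_pos hpv 3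
    refine Finset.sum_pos' (fun i _ => pow_nonneg (hmnn i) 3) ⟨vp, Finset.mem_univ vp, hterm⟩
  -- contradiction with extremality of m₁
  have hfin := hext₁ m hmnn hvm_pos
  rw [hv₁, div_one] at hfin
  have hdm3 : l₁ ^ 3 ≤ (gdist G m A₁ A₂) ^ 3 := pow_le_pow_left₀ hl₁0 hdm 3
  have hl₁3pos : 0 < l₁ ^ 3 := by positivity
  have : (gdist G m A₁ A₂) ^ 3 ≤ l₁ ^ 3 * gvol m := (div_le_iff₀ hvm_pos).1 hfin
  nlinarith
end

section
/- Let m be a metric on V with vol(m) = Σ_v m(v)³ = 1, and let α be a subset of V such that the function t ↦ l_{m_{α,t}} := l_{m_{α,t}}(A₁,A₂) satisfies l_{m_{α,t}} ≥ l_m + t for all small t ≥ 0. If m is extremal for (G,A₁,A₂) (maximizes l³/vol), then Σ_{v∈α} m(v)² ≥ l_m⁻¹, where l_m = l_m(A₁,A₂) > 0. -/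
set_option maxHeartbeats 1000000 in
/-- If `m` is a normalized extremal metric and `α` meets all shortest paths,
in the sense that `l_{m_{α,t}} ≥ l_m + t` for small `t ≥ 0`, then
`∑_{v ∈ α} m(v)² ≥ l_m⁻¹`. -/
theorem stmt6 {V : Type*} [Fintype V] [DecidableEq V] (G : SimpleGraph V) (hG : G.Connected)
    (A₁ A₂ : Set V) (h₁ : A₁.Nonempty) (h₂ : A₂.Nonempty)
    (m : V → ℝ) (hm : ∀ v, 0 ≤ m v) (hvol : gvol m = 1)
    (hpos : 0 < gdist G m A₁ A₂)
    (α : Finset V)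
    (hα : ∃ ε > 0, ∀ t ∈ Set.Icc (0 : ℝ) ε,
      gdist G m A₁ A₂ + t ≤ gdist G (fun v => if v ∈ α then m v + t else m v) A₁ A₂)
    (hext : ∀ m' : V → ℝ, (∀ v, 0 ≤ m' v) → 0 < gvol m' →
      (gdist G m' A₁ A₂) ^ 3 / gvol m' ≤ (gdist G m A₁ A₂) ^ 3 / gvol m) :
    (gdist G m A₁ A₂)⁻¹ ≤ ∑ v ∈ α, m v ^ 2 := by
  obtain ⟨ε, hε, hεt⟩ := hα
  set l := gdist G m A₁ A₂ with hl
  set S₂ := ∑ v ∈ α, m v ^ 2 with hS2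
  set S₁ := ∑ v ∈ α, m v with hS1
  set c := (α.card : ℝ) with hc
  have key : ∀ t ∈ Set.Ioc (0:ℝ) ε,
      3*l^2 + 3*l*t + t^2 ≤ l^3 * (3*S₂ + 3*S₁*t + c*t^2) := by
    rintro t ⟨ht0, htε⟩
    set m' := fun v => if v ∈ α then m v + t else m v with hm'
    have hm'0 : ∀ v, 0 ≤ m' v := by
      intro v; simp only [hm']
      split
      · linarith [hm v]
      · exact hm v
    have hvol' : gvol m' = 1 + (3*S₂*t + 3*S₁*t^2 + c*t^3) := by
      have e1 : gvol m' = ∑ v, (m v ^ 3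
          + (if v ∈ α then 3*m v^2*t + 3*m v*t^2 + t^3 else 0)) := by
        unfold gvol
        refine Finset.sum_congr rfl fun v _ => ?_
        by_cases h : v ∈ α <;> simp [hm', h] <;> ring
      rw [e1, Finset.sum_add_distrib]
      have e2 : (∑ v : V, m v ^ 3) = 1 := hvol
      have e3 : (∑ v : V, (if v ∈ α then 3*m v^2*t + 3*m v*t^2 + t^3 else 0))
          = ∑ v ∈ α, (3*m v^2*t + 3*m v*t^2 + t^3) := by
        rw [Finset.sum_ite_mem, Finset.univ_inter]
      rw [e2, e3]
      have ha : (3:ℝ)*S₂*t = ∑ v ∈ α, 3*m v^2*t := by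
        rw [hS2, Finset.mul_sum, Finset.sum_mul]
      have hb : (3:ℝ)*S₁*t^2 = ∑ v ∈ α, 3*m v*t^2 := by
        rw [hS1, Finset.mul_sum, Finset.sum_mul]
      have hc' : c*t^3 = ∑ v ∈ α, t^3 := by
        rw [hc, Finset.sum_const, nsmul_eq_mul]
      have e4 : ∑ v ∈ α, (3*m v^2*t + 3*m v*t^2 + t^3)
          = 3*S₂*t + 3*S₁*t^2 + c*t^3 := by
        rw [Finset.sum_add_distrib, Finset.sum_add_distrib, ← ha, ← hb, ← hc']
      rw [e4]
    have hvolpos : 0 < gvol m' := by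
      rw [hvol']
      have h2 : 0 ≤ S₂ := Finset.sum_nonneg fun v _ => by positivity
      have h1 : 0 ≤ S₁ := Finset.sum_nonneg fun v _ => hm v
      have hc0 : 0 ≤ c := by positivity
      nlinarith [mul_nonneg h2 ht0.le, mul_nonneg h1 (sq_nonneg t),
        mul_nonneg hc0 (pow_nonneg ht0.le 3)]
    have hd : l + t ≤ gdist G m' A₁ A₂ := hεt t ⟨le_of_lt ht0, htε⟩
    have hcube : (l+t)^3 ≤ (gdist G m' A₁ A₂)^3 :=
      pow_le_pow_left₀ (by linarith) hd 3
    have hx := hext m' hm'0 hvolpos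
    rw [hvol] at hx
    have hx' : (gdist G m' A₁ A₂)^3 ≤ l^3 * gvol m' := by
      rw [div_le_iff₀ hvolpos] at hx
      simpa [mul_comm] using hx
    have hmain : (l+t)^3 ≤ l^3 * (1 + (3*S₂*t + 3*S₁*t^2 + c*t^3)) := by
      rw [← hvol']; exact hcube.trans hx'
    have hmul : (3*l^2 + 3*l*t + t^2) * t ≤ (l^3 * (3*S₂ + 3*S₁*t + c*t^2)) * t := by
      nlinarith [hmain]
    exact le_of_mul_le_mul_right hmul ht0
  -- take the limit t → 0⁺
  have lim : Filter.Tendsto (fun t : ℝ => l^3 * (3*S₂ + 3*S₁*t + c*t^2) - (3*l^2 + 3*l*t + t^2))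
      (nhdsWithin 0 (Set.Ioi 0)) (nhds (l^3 * (3*S₂) - 3*l^2)) := by
    have hcont : Continuous (fun t : ℝ => l^3 * (3*S₂ + 3*S₁*t + c*t^2) - (3*l^2 + 3*l*t + t^2)) := by
      fun_prop
    have := (hcont.tendsto 0).mono_left (nhdsWithin_le_nhds (s := Set.Ioi (0:ℝ)))
    simpa using this
  have hev : ∀ᶠ t in nhdsWithin 0 (Set.Ioi 0),
      (0:ℝ) ≤ l^3 * (3*S₂ + 3*S₁*t + c*t^2) - (3*l^2 + 3*l*t + t^2) := by
    filter_upwards [Ioc_mem_nhdsGT_of_mem (Set.mem_Ico.mpr ⟨le_refl 0, hε⟩)] with t ht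
    linarith [key t ht]
  have h0 : (0:ℝ) ≤ l^3 * (3*S₂) - 3*l^2 := ge_of_tendsto lim hev
  have h1 : 1 ≤ l * S₂ := by nlinarith [mul_pos hpos hpos]
  rw [inv_eq_one_div, div_le_iff₀ hpos]
  linarith [mul_comm l S₂, h1]
end

section
/- Under the hypotheses of the previous statement, any such subset α satisfies (Σ_{v∈α} m(v))² ≥ Σ_{v∈α} m(v)² ≥ l_m⁻¹ = h⁻¹; in particular the m-length of α is at least √(h⁻¹), where h = l_m(A₁,A₂). -/
/-- Shortest curves are not too short: with `h = l_m(A₁,A₂)`, any set `α` meeting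
all `m`-shortest paths satisfies `(∑_{v∈α} m v)² ≥ ∑_{v∈α} m(v)² ≥ h⁻¹`, hence its
`m`-length is at least `√(h⁻¹)`. -/
theorem stmt7 {V : Type*} [Fintype V] [DecidableEq V] (G : SimpleGraph V) (hG : G.Connected)
    (A₁ A₂ : Set V) (h₁ : A₁.Nonempty) (h₂ : A₂.Nonempty)
    (m : V → ℝ) (hm : ∀ v, 0 ≤ m v) (hvol : gvol m = 1)
    (hpos : 0 < gdist G m A₁ A₂)
    (α : Finset V)
    (hα : ∃ ε > 0, ∀ t ∈ Set.Icc (0 : ℝ) ε,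
      gdist G m A₁ A₂ + t ≤ gdist G (fun v => if v ∈ α then m v + t else m v) A₁ A₂)
    (hext : ∀ m' : V → ℝ, (∀ v, 0 ≤ m' v) → 0 < gvol m' →
      (gdist G m' A₁ A₂) ^ 3 / gvol m' ≤ (gdist G m A₁ A₂) ^ 3 / gvol m) :
    (∑ v ∈ α, m v ^ 2 ≤ (∑ v ∈ α, m v) ^ 2) ∧
      (gdist G m A₁ A₂)⁻¹ ≤ ∑ v ∈ α, m v ^ 2 ∧
      Real.sqrt (gdist G m A₁ A₂)⁻¹ ≤ ∑ v ∈ α, m v := by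
  obtain ⟨ε, hε, hαt⟩ := hα
  set h := gdist G m A₁ A₂ with hh
  set S := ∑ v ∈ α, m v ^ 2 with hS
  set L := ∑ v ∈ α, m v with hL
  set n : ℝ := (α.card : ℝ) with hn
  have hS0 : 0 ≤ S := Finset.sum_nonneg fun v _ => sq_nonneg _
  have hL0 : 0 ≤ L := Finset.sum_nonneg fun v _ => hm v
  have hn0 : (0:ℝ) ≤ n := Nat.cast_nonneg _
  have key : ∀ t : ℝ, 0 < t → t ≤ ε →
      (h + t) ^ 3 ≤ h ^ 3 * (1 + 3*t*S + 3*t^2*L + t^3*n) := by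
    intro t ht0 htε
    set m' : V → ℝ := fun v => if v ∈ α then m v + t else m v with hm'def
    have hm' : ∀ v, 0 ≤ m' v := by
      intro v
      by_cases hv : v ∈ α
      · simp only [hm'def, hv, if_true]
        linarith [hm v]
      · simp only [hm'def, hv, if_false]
        exact hm v
    have hvol' : gvol m' = 1 + 3*t*S + 3*t^2*L + t^3*n := by
      have hterm : ∀ v : V, m' v ^ 3
          = m v ^ 3 + (if v ∈ α then 3*(m v)^2*t + 3*(m v)*t^2 + t^3 else 0) := by
        intro v
        by_cases hv : v ∈ α <;> simp [hm'def, hv] <;> ring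
      have h1 : gvol m' = gvol m + ∑ v ∈ α, (3*(m v)^2*t + 3*(m v)*t^2 + t^3) := by
        have hι : ∑ v ∈ α, (3*(m v)^2*t + 3*(m v)*t^2 + t^3)
            = ∑ v : V, (if v ∈ α then 3*(m v)^2*t + 3*(m v)*t^2 + t^3 else 0) := by
          rw [Finset.sum_ite_mem, Finset.univ_inter]
        rw [hι]
        simp only [gvol, ← Finset.sum_add_distrib]
        exact Finset.sum_congr rfl fun v _ => hterm v
      have h2 : ∑ v ∈ α, (3*(m v)^2*t + 3*(m v)*t^2 + t^3)
          = 3*t*S + 3*t^2*L + t^3*n := by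
        rw [Finset.sum_add_distrib, Finset.sum_add_distrib, Finset.sum_const,
          nsmul_eq_mul]
        have e1 : ∑ v ∈ α, 3*(m v)^2*t = 3*t*S := by
          rw [hS, Finset.mul_sum]
          exact Finset.sum_congr rfl fun v _ => by ring
        have e2 : ∑ v ∈ α, 3*(m v)*t^2 = 3*t^2*L := by
          rw [hL, Finset.mul_sum]
          exact Finset.sum_congr rfl fun v _ => by ring
        rw [e1, e2, hn]
        ring
      rw [h1, h2, hvol]
      ring
    have hvolpos : 0 < gvol m' := by
      rw [hvol']
      have e1 : 0 ≤ 3*t*S := by positivity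
      have e2 : 0 ≤ 3*t^2*L := by positivity
      have e3 : 0 ≤ t^3*n := by positivity
      linarith
    have hd := hext m' hm' hvolpos
    rw [hvol, div_one] at hd
    have hdist : h + t ≤ gdist G m' A₁ A₂ := hαt t ⟨le_of_lt ht0, htε⟩
    have hht : 0 ≤ h + t := by linarith
    have hc1 : (h + t) ^ 3 ≤ (gdist G m' A₁ A₂) ^ 3 := pow_le_pow_left₀ hht hdist 3
    have hc2 : (gdist G m' A₁ A₂) ^ 3 ≤ h ^ 3 * gvol m' := by
      rw [div_le_iff₀ hvolpos] at hd
      linarith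
    rw [hvol'] at hc2
    linarith
  have hmain : h⁻¹ ≤ S := by
    by_contra hcon
    push_neg at hcon
    have h1 : h * S < 1 := by
      have := mul_lt_mul_of_pos_left hcon hpos
      rwa [mul_inv_cancel₀ (ne_of_gt hpos)] at this
    have hhS : 3*h^3*S < 3*h^2 := by nlinarith [mul_lt_mul_of_pos_left h1 (by positivity : (0:ℝ) < 3*h^2)]
    set δ := 3*h^2 - 3*h^3*S with hδ
    have hδpos : 0 < δ := by linarith
    set D := 3*h^3*L + h^3*n + 1 with hD
    have hDpos : 0 < D := by positivity
    set t := min ε (min 1 (δ / (2*D))) with ht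
    have ht0 : 0 < t := lt_min hε (lt_min one_pos (by positivity))
    have htε : t ≤ ε := min_le_left _ _
    have ht1 : t ≤ 1 := le_trans (min_le_right _ _) (min_le_left _ _)
    have htδ : t ≤ δ / (2*D) := le_trans (min_le_right _ _) (min_le_right _ _)
    have htD : t * D ≤ δ / 2 := by
      rw [← le_div_iff₀ hDpos]
      rwa [div_div]
    have hsmall : t * (3*h^3*L + h^3*n) < δ := by
      have e : t * (3*h^3*L + h^3*n) = t * D - t := by rw [hD]; ring
      rw [e]
      linarith
    have hkey := key t ht0 htε
    have e1 : 3*h^2*t + 3*h*t^2 + t^3 ≤ 3*h^3*S*t + 3*h^3*L*t^2 + h^3*n*t^3 := by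
      nlinarith [hkey]
    have e4 : h^3*n*t^3 ≤ h^3*n*t^2 := by
      nlinarith [mul_nonneg (mul_nonneg (pow_nonneg (le_of_lt hpos) 3) hn0)
        (mul_nonneg (mul_nonneg (le_of_lt ht0) (le_of_lt ht0)) (sub_nonneg.2 ht1))]
    have e5 : t*(t*(3*h^3*L + h^3*n)) < t*δ := mul_lt_mul_of_pos_left hsmall ht0
    have e6 : t*δ = 3*h^2*t - 3*h^3*S*t := by rw [hδ]; ring
    have e7 : 3*h^3*L*t^2 + h^3*n*t^2 = t*(t*(3*h^3*L + h^3*n)) := by ring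
    have e8 : 0 ≤ 3*h*t^2 :=
      mul_nonneg (mul_nonneg (by norm_num) (le_of_lt hpos)) (sq_nonneg t)
    have e9 : 0 < t^3 := pow_pos ht0 3
    clear_value t δ D S L n h
    linarith [e1, e4, e5, e6, e7, e8, e9]
  refine ⟨Finset.sum_sq_le_sq_sum_of_nonneg (fun v _ => hm v), hmain, ?_⟩
  have h2 : h⁻¹ ≤ L ^ 2 :=
    le_trans hmain (Finset.sum_sq_le_sq_sum_of_nonneg (fun v _ => hm v))
  calc Real.sqrt h⁻¹ ≤ Real.sqrt (L^2) := Real.sqrt_le_sqrt h2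
    _ = L := Real.sqrt_sq hL0
end

section
/- Suppose a family of axis-parallel cubes {C_v}_{v∈V} in ℝ³ tiles the rectangular parallelepiped R = [0,√(h⁻¹)] × [0,√(h⁻¹)] × [0,h] (the cubes have pairwise disjoint interiors and union R), C_v has edge length s(v), and for every (t₁,t₂) ∈ [0,√(h⁻¹)]², the set γ_{t₁,t₂} = {v ∈ V : ({(t₁,t₂)} × ℝ) ∩ C_v ≠ ∅} contains the vertex set of a path in G joining B₁ to B̄₁. Then for any metric m : V → [0,∞), h⁻¹ · l_m(B₁,B̄₁) ≤ Σ_{v∈V} m(v)·s(v)². -/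
open MeasureTheory Set

section gdist

variable {V : Type*} {G : SimpleGraph V} {m : V → ℝ} {A B : Set V} {u w : V}

theorem gdist_le_walk_sum (hm : ∀ v, 0 ≤ m v) (hu : u ∈ A) (hw : w ∈ B) (p : G.Walk u w) :
    gdist G m A B ≤ (p.support.map m).sum := by
  refine csInf_le ⟨0, ?_⟩ ⟨u, hu, w, hw, p, rfl⟩
  rintro _ ⟨_, _, _, _, q, rfl⟩
  exact List.sum_nonneg fun _ hx => by
    obtain ⟨y, -, rfl⟩ := List.mem_map.1 hx
    exact hm y

-- The path `p.bypass` visits each vertex of `p` at most once.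
theorem gdist_le_sum_of_support_subset [DecidableEq V] (hm : ∀ v, 0 ≤ m v) (hu : u ∈ A)
    (hw : w ∈ B) (p : G.Walk u w) {S : Finset V} (hS : ∀ v ∈ p.support, v ∈ S) :
    gdist G m A B ≤ ∑ v ∈ S, m v :=
  calc gdist G m A B ≤ (p.bypass.support.map m).sum := gdist_le_walk_sum hm hu hw p.bypass
    _ = ∑ v ∈ p.bypass.support.toFinset, m v :=
      (List.sum_toFinset m p.bypass_isPath.support_nodup).symm
    _ ≤ ∑ v ∈ S, m v :=
      Finset.sum_le_sum_of_subset_of_nonneg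
        (fun v hv => hS v (p.support_bypass_subset_support (List.mem_toFinset.1 hv)))
        (fun v _ _ => hm v)

end gdist

theorem measureReal_mul_le_sum_mul_measureReal {α ι : Type*} [MeasurableSpace α]
    (μ : Measure α) {T : Set α} (hT : MeasurableSet T) (hTfin : μ T ≠ ⊤) (S : Finset ι)
    {P : ι → Set α} (hP : ∀ i, MeasurableSet (P i)) (hPfin : ∀ i, μ (P i) ≠ ⊤)
    {c : ι → ℝ} (hc : ∀ i, 0 ≤ c i) {L : ℝ}
    (hL : ∀ t ∈ T, L ≤ ∑ i ∈ S, (P i).indicator (fun _ => c i) t) :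
    μ.real T * L ≤ ∑ i ∈ S, c i * μ.real (P i) := by
  have hint : ∀ i, IntegrableOn ((P i).indicator fun _ => c i) T μ := fun i =>
    (integrableOn_const hTfin).indicator (hP i)
  calc μ.real T * L = ∫ _ in T, L ∂μ := by rw [setIntegral_const, smul_eq_mul]
    _ ≤ ∫ t in T, ∑ i ∈ S, (P i).indicator (fun _ => c i) t ∂μ :=
      setIntegral_mono_on (integrableOn_const hTfin) (integrable_finsetSum _ fun i _ => hint i)
        hT hL
    _ = ∑ i ∈ S, c i * μ.real (T ∩ P i) := by
      rw [integral_finsetSum _ fun i _ => hint i]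
      refine Finset.sum_congr rfl fun i _ => ?_
      rw [setIntegral_indicator (hP i), setIntegral_const, smul_eq_mul, mul_comm]
    _ ≤ ∑ i ∈ S, c i * μ.real (P i) := by
      gcongr with i
      · exact hc i
      · exact hPfin i
      · exact inter_subset_right

theorem volume_real_Icc_prod_Icc {a b c d : ℝ} (hab : a ≤ b) (hcd : c ≤ d) :
    volume.real (Icc a b ×ˢ Icc c d) = (b - a) * (d - c) := by
  rw [Measure.volume_eq_prod, measureReal_prod_prod, Real.volume_real_Icc_of_le hab,
    Real.volume_real_Icc_of_le hcd]

theorem stmt10_general {V : Type*} [Fintype V] (G : SimpleGraph V)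
    (B₁ B₂ : Set V)
    (h : ℝ) (hh : 0 < h) (a : V → (Fin 3 → ℝ)) (s : V → ℝ) (hs : ∀ v, 0 ≤ s v)
    (hline : ∀ t₁ ∈ Set.Icc (0 : ℝ) (Real.sqrt h⁻¹), ∀ t₂ ∈ Set.Icc (0 : ℝ) (Real.sqrt h⁻¹),
      ∃ u ∈ B₁, ∃ w ∈ B₂, ∃ p : G.Walk u w, ∀ x ∈ p.support,
        ∃ q : Fin 3 → ℝ, q 0 = t₁ ∧ q 1 = t₂ ∧ q ∈ Set.Icc (a x) (a x + fun _ => s x))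
    (m : V → ℝ) (hm : ∀ v, 0 ≤ m v) :
    h⁻¹ * gdist G m B₁ B₂ ≤ ∑ v, m v * s v ^ 2 := by
  classical
  set r := Real.sqrt h⁻¹
  let T := Icc 0 r ×ˢ Icc 0 r
  let P v := Icc (a v 0) (a v 0 + s v) ×ˢ Icc (a v 1) (a v 1 + s v)
  have hpoint : ∀ t ∈ T, gdist G m B₁ B₂ ≤ ∑ v, (P v).indicator (fun _ => m v) t := by
    rintro ⟨t₁, t₂⟩ ⟨ht₁, ht₂⟩
    obtain ⟨u, hu, w, hw, p, hp⟩ := hline t₁ ht₁ t₂ ht₂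
    simp only [indicator_apply]
    rw [← Finset.sum_filter]
    refine gdist_le_sum_of_support_subset hm hu hw p fun x hx => ?_
    obtain ⟨q, rfl, rfl, hqa, hqs⟩ := hp x hx
    exact Finset.mem_filter.2 ⟨Finset.mem_univ x, ⟨hqa 0, hqs 0⟩, hqa 1, hqs 1⟩
  have hT : volume.real T = h⁻¹ := by
    rw [volume_real_Icc_prod_Icc (Real.sqrt_nonneg _) (Real.sqrt_nonneg _), sub_zero,
      Real.mul_self_sqrt (inv_nonneg.2 hh.le)]
  have hP v : volume.real (P v) = s v ^ 2 := by
    rw [volume_real_Icc_prod_Icc (le_add_of_nonneg_right (hs v)) (le_add_of_nonneg_right (hs v))]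
    ring
  calc h⁻¹ * gdist G m B₁ B₂ = volume.real T * gdist G m B₁ B₂ := by rw [hT]
    _ ≤ ∑ v, m v * volume.real (P v) :=
      measureReal_mul_le_sum_mul_measureReal volume (measurableSet_Icc.prod measurableSet_Icc)
        (isCompact_Icc.prod isCompact_Icc).measure_ne_top Finset.univ
        (fun _ => measurableSet_Icc.prod measurableSet_Icc)
        (fun _ => (isCompact_Icc.prod isCompact_Icc).measure_ne_top) hm hpoint
    _ = ∑ v, m v * s v ^ 2 := by simp only [hP]

/-- Averaging inequality: if axis-parallel cubes `C_v` of edge `s v` tile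
`R = [0,√h⁻¹]² × [0,h]` and every vertical line through the base meets the cubes of
a walk from `B₁` to `B̄₁`, then `h⁻¹ · l_m(B₁,B̄₁) ≤ ∑ m(v) s(v)²`. -/
theorem stmt10 {V : Type*} [Fintype V] (G : SimpleGraph V)
    (B₁ B₂ : Set V) (h₁ : B₁.Nonempty) (h₂ : B₂.Nonempty)
    (h : ℝ) (hh : 0 < h) (a : V → (Fin 3 → ℝ)) (s : V → ℝ) (hs : ∀ v, 0 ≤ s v)
    (huni : (⋃ v, Set.Icc (a v) (a v + fun _ => s v))
      = Set.Icc (0 : Fin 3 → ℝ) ![Real.sqrt h⁻¹, Real.sqrt h⁻¹, h])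
    (hdisj : ∀ u v : V, u ≠ v →
      Disjoint (interior (Set.Icc (a u) (a u + fun _ => s u)))
        (interior (Set.Icc (a v) (a v + fun _ => s v))))
    (hline : ∀ t₁ ∈ Set.Icc (0 : ℝ) (Real.sqrt h⁻¹), ∀ t₂ ∈ Set.Icc (0 : ℝ) (Real.sqrt h⁻¹),
      ∃ u ∈ B₁, ∃ w ∈ B₂, ∃ p : G.Walk u w, ∀ x ∈ p.support,
        ∃ q : Fin 3 → ℝ, q 0 = t₁ ∧ q 1 = t₂ ∧ q ∈ Set.Icc (a x) (a x + fun _ => s x))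
    (m : V → ℝ) (hm : ∀ v, 0 ≤ m v) :
    h⁻¹ * gdist G m B₁ B₂ ≤ ∑ v, m v * s v ^ 2 :=
  stmt10_general G B₁ B₂ h hh a s hs hline m hm
end
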